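/- arXiv:2410.00415 — 2 statements merged into one kernel-verified Lean document; each statement's English description precedes it below -/
import Mathlib

section
/- Let f₁ = φ(·; μ₁, Σ₁) and f₂ = φ(·; μ₂, Σ₂) be bivariate normal densities, let c ∈ (0, 1), and let M_c = c f₁ + (1 − c) f₂. If x₀ ∈ ℝ² is a critical point of M_c (the gradient of M_c vanishes at x₀), then x₀ lies on the ridgeline: there exists α ∈ [0, 1] such that x₀ = S_α⁻¹ ((1 − α) Σ₁⁻¹ μ₁ + α Σ₂⁻¹ μ₂), where S_α = (1 − α) Σ₁⁻¹ + α Σ₂⁻¹. -/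
open Matrix

noncomputable section

/-- A diffeomorphism of the plane: a smooth bijection with smooth inverse. -/
def IsDiffeo (Φ : ℝ × ℝ → ℝ × ℝ) : Prop :=
  ∃ e : (ℝ × ℝ) ≃ (ℝ × ℝ), ⇑e = Φ ∧ ContDiff ℝ (⊤ : ℕ∞) ⇑e ∧ ContDiff ℝ (⊤ : ℕ∞) ⇑e.symm

/-- `F` and `G` are A-equivalent: `Ψ ∘ F ∘ Φ = G` for diffeomorphisms `Φ, Ψ` of the plane. -/
def AEquiv (F G : ℝ × ℝ → ℝ × ℝ) : Prop :=
  ∃ Φ Ψ : ℝ × ℝ → ℝ × ℝ, IsDiffeo Φ ∧ IsDiffeo Ψ ∧ Ψ ∘ F ∘ Φ = G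

/-- Generalized distance-squared mapping `G(p₁, p₂, A)`. -/
def Gmap (p₁ p₂ : ℝ × ℝ) (A : Matrix (Fin 2) (Fin 2) ℝ) : ℝ × ℝ → ℝ × ℝ :=
  fun z => (A 0 0 * (z.1 - p₁.1) ^ 2 + A 0 1 * (z.2 - p₁.2) ^ 2,
            A 1 0 * (z.1 - p₂.1) ^ 2 + A 1 1 * (z.2 - p₂.2) ^ 2)

/-- Singular set `S(F)`: points where the Jacobian determinant of `F` vanishes. -/
def singularSet (F : ℝ × ℝ → ℝ × ℝ) : Set (ℝ × ℝ) :=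
  {z | LinearMap.det (fderiv ℝ F z).toLinearMap = 0}

/-- Bivariate normal density `φ(·; μ, S)` on the plane. -/
def gauss (μ : Fin 2 → ℝ) (S : Matrix (Fin 2) (Fin 2) ℝ) (z : ℝ × ℝ) : ℝ :=
  (2 * Real.pi * Real.sqrt S.det)⁻¹ *
    Real.exp (-(1 / 2) * dotProduct ![z.1 - μ 0, z.2 - μ 1] (S⁻¹ *ᵥ ![z.1 - μ 0, z.2 - μ 1]))

/-- Mixture density `M_c = c f₁ + (1 - c) f₂`. -/
def mix (f₁ f₂ : ℝ × ℝ → ℝ) (c : ℝ) : ℝ × ℝ → ℝ :=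
  fun z => c * f₁ z + (1 - c) * f₂ z

/-- `f₁ = φ(·; μ₁, V₁)` and `f₂ = φ(·; μ₂, V₂)` are codirectional:
`μ₁ - μ₂` is an eigenvector of both `V₁` and `V₂`. -/
def Codirectional (μ₁ μ₂ : Fin 2 → ℝ) (V₁ V₂ : Matrix (Fin 2) (Fin 2) ℝ) : Prop :=
  ∃ a b : ℝ, V₁ *ᵥ (μ₁ - μ₂) = a • (μ₁ - μ₂) ∧ V₂ *ᵥ (μ₁ - μ₂) = b • (μ₁ - μ₂)

/-- The covariance matrices `V₁` and `V₂` are proportional. -/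
def Proportional (V₁ V₂ : Matrix (Fin 2) (Fin 2) ℝ) : Prop :=
  ∃ c : ℝ, 0 < c ∧ V₁ = c • V₂

/-- An affine line in the plane. -/
def IsAffineLine (ℓ : Set (ℝ × ℝ)) : Prop :=
  ∃ p v : ℝ × ℝ, v ≠ 0 ∧ ℓ = {q | ∃ t : ℝ, q = p + t • v}

end

lemma gauss_expand (μ : Fin 2 → ℝ) (S : Matrix (Fin 2) (Fin 2) ℝ) (z : ℝ × ℝ) :
    gauss μ S z = (2 * Real.pi * Real.sqrt S.det)⁻¹ *
      Real.exp (-(1 / 2) * ((z.1 - μ 0) * (S⁻¹ 0 0 * (z.1 - μ 0) + S⁻¹ 0 1 * (z.2 - μ 1)) +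
        (z.2 - μ 1) * (S⁻¹ 1 0 * (z.1 - μ 0) + S⁻¹ 1 1 * (z.2 - μ 1)))) := by
  simp [gauss, dotProduct, mulVec, Fin.sum_univ_two]

lemma gauss_deriv (μ : Fin 2 → ℝ) (S : Matrix (Fin 2) (Fin 2) ℝ) (hS : S⁻¹ 0 1 = S⁻¹ 1 0)
    (z : ℝ × ℝ) :
    ∃ L : (ℝ × ℝ) →L[ℝ] ℝ, HasFDerivAt (gauss μ S) L z ∧
      ∀ h : ℝ × ℝ, L h = -(gauss μ S z) *
        (h.1 * (S⁻¹ *ᵥ ![z.1 - μ 0, z.2 - μ 1]) 0 + h.2 * (S⁻¹ *ᵥ ![z.1 - μ 0, z.2 - μ 1]) 1) := by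
  have h1 : HasFDerivAt (fun z : ℝ × ℝ => z.1 - μ 0) (ContinuousLinearMap.fst ℝ ℝ ℝ) z :=
    (hasFDerivAt_fst).sub_const _
  have h2 : HasFDerivAt (fun z : ℝ × ℝ => z.2 - μ 1) (ContinuousLinearMap.snd ℝ ℝ ℝ) z :=
    (hasFDerivAt_snd).sub_const _
  have hP : HasFDerivAt (fun z : ℝ × ℝ =>
      -(1/2) * ((z.1 - μ 0) * (S⁻¹ 0 0 * (z.1 - μ 0) + S⁻¹ 0 1 * (z.2 - μ 1)) +
        (z.2 - μ 1) * (S⁻¹ 1 0 * (z.1 - μ 0) + S⁻¹ 1 1 * (z.2 - μ 1)))) _ z :=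
    (((h1.mul ((h1.const_mul (S⁻¹ 0 0)).add (h2.const_mul (S⁻¹ 0 1)))).add
      (h2.mul ((h1.const_mul (S⁻¹ 1 0)).add (h2.const_mul (S⁻¹ 1 1))))).const_mul (-(1/2) : ℝ))
  have hE := hP.exp
  have hG := hE.const_mul ((2 * Real.pi * Real.sqrt S.det)⁻¹ : ℝ)
  have hfun : (fun y : ℝ × ℝ => (2 * Real.pi * Real.sqrt S.det)⁻¹ *
      Real.exp (-(1/2) * ((y.1 - μ 0) * (S⁻¹ 0 0 * (y.1 - μ 0) + S⁻¹ 0 1 * (y.2 - μ 1)) +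
        (y.2 - μ 1) * (S⁻¹ 1 0 * (y.1 - μ 0) + S⁻¹ 1 1 * (y.2 - μ 1))))) = gauss μ S := by
    funext w
    rw [gauss_expand]
  rw [hfun] at hG
  refine ⟨_, hG, fun h => ?_⟩
  rw [gauss_expand]
  simp only [mulVec, dotProduct, Fin.sum_univ_two, Matrix.cons_val_zero, Matrix.cons_val_one,
    Matrix.head_cons, ContinuousLinearMap.smul_apply, ContinuousLinearMap.add_apply,
    ContinuousLinearMap.coe_fst', ContinuousLinearMap.coe_snd', smul_eq_mul, Pi.add_apply]
  rw [hS]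
  ring

lemma gauss_pos (μ : Fin 2 → ℝ) (S : Matrix (Fin 2) (Fin 2) ℝ) (hS : S.PosDef) (z : ℝ × ℝ) :
    0 < gauss μ S z := by
  have h1 : 0 < Real.sqrt S.det := Real.sqrt_pos.mpr hS.det_pos
  have h2 : 0 < (2 * Real.pi * Real.sqrt S.det)⁻¹ :=
    inv_pos.mpr (mul_pos (mul_pos two_pos Real.pi_pos) h1)
  exact mul_pos h2 (Real.exp_pos _)

theorem stmt_16 (μ₁ μ₂ : Fin 2 → ℝ) (V₁ V₂ : Matrix (Fin 2) (Fin 2) ℝ)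
    (h₁ : V₁.PosDef) (h₂ : V₂.PosDef) (c : ℝ) (hc : c ∈ Set.Ioo (0 : ℝ) 1)
    (x₀ : ℝ × ℝ) (hcrit : fderiv ℝ (mix (gauss μ₁ V₁) (gauss μ₂ V₂) c) x₀ = 0) :
    ∃ α ∈ Set.Icc (0 : ℝ) 1,
      ![x₀.1, x₀.2] = ((1 - α) • V₁⁻¹ + α • V₂⁻¹)⁻¹ *ᵥ
        ((1 - α) • (V₁⁻¹ *ᵥ μ₁) + α • (V₂⁻¹ *ᵥ μ₂)) := by
  obtain ⟨hc0, hc1⟩ := hc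
  have hA₁ : (V₁⁻¹).PosDef := h₁.inv
  have hA₂ : (V₂⁻¹).PosDef := h₂.inv
  have hsym₁ : V₁⁻¹ 0 1 = V₁⁻¹ 1 0 := (hA₁.1.apply 0 1).symm
  have hsym₂ : V₂⁻¹ 0 1 = V₂⁻¹ 1 0 := (hA₂.1.apply 0 1).symm
  obtain ⟨L₁, hL₁, hL₁e⟩ := gauss_deriv μ₁ V₁ hsym₁ x₀
  obtain ⟨L₂, hL₂, hL₂e⟩ := gauss_deriv μ₂ V₂ hsym₂ x₀
  have hmix : HasFDerivAt (mix (gauss μ₁ V₁) (gauss μ₂ V₂) c)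
      (c • L₁ + (1 - c) • L₂) x₀ := (hL₁.const_mul c).add (hL₂.const_mul (1 - c))
  have hzero : (c • L₁ + (1 - c) • L₂ : (ℝ × ℝ) →L[ℝ] ℝ) = 0 := by
    rw [← hmix.fderiv, hcrit]
  obtain ⟨g₁, hg₁def⟩ : ∃ g, gauss μ₁ V₁ x₀ = g := ⟨_, rfl⟩
  obtain ⟨g₂, hg₂def⟩ : ∃ g, gauss μ₂ V₂ x₀ = g := ⟨_, rfl⟩
  obtain ⟨u₁, hu₁⟩ : ∃ u, V₁⁻¹ *ᵥ ![x₀.1 - μ₁ 0, x₀.2 - μ₁ 1] = u := ⟨_, rfl⟩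
  obtain ⟨u₂, hu₂⟩ : ∃ u, V₂⁻¹ *ᵥ ![x₀.1 - μ₂ 0, x₀.2 - μ₂ 1] = u := ⟨_, rfl⟩
  rw [hg₁def, hu₁] at hL₁e
  rw [hg₂def, hu₂] at hL₂e
  have hg₁ : 0 < g₁ := hg₁def ▸ gauss_pos μ₁ V₁ h₁ x₀
  have hg₂ : 0 < g₂ := hg₂def ▸ gauss_pos μ₂ V₂ h₂ x₀
  have key0 : c * g₁ * u₁ 0 + (1 - c) * g₂ * u₂ 0 = 0 := by
    have h := DFunLike.congr_fun hzero ((1 : ℝ), (0 : ℝ))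
    simp only [ContinuousLinearMap.add_apply, ContinuousLinearMap.smul_apply, smul_eq_mul,
      ContinuousLinearMap.zero_apply, hL₁e, hL₂e] at h
    linear_combination -h
  have key1 : c * g₁ * u₁ 1 + (1 - c) * g₂ * u₂ 1 = 0 := by
    have h := DFunLike.congr_fun hzero ((0 : ℝ), (1 : ℝ))
    simp only [ContinuousLinearMap.add_apply, ContinuousLinearMap.smul_apply, smul_eq_mul,
      ContinuousLinearMap.zero_apply, hL₁e, hL₂e] at h
    linear_combination -h
  obtain ⟨T, hT⟩ : ∃ T, c * g₁ + (1 - c) * g₂ = T := ⟨_, rfl⟩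
  have hT0 : 0 < T := by
    have h1 := mul_pos hc0 hg₁
    have h2 := mul_pos (by linarith : (0:ℝ) < 1 - c) hg₂
    linarith [hT]
  obtain ⟨α, hα⟩ : ∃ a, (1 - c) * g₂ / T = a := ⟨_, rfl⟩
  have hα0 : 0 < α := hα ▸ div_pos (mul_pos (by linarith) hg₂) hT0
  have hα1' : 1 - α = c * g₁ / T := by
    rw [← hα]
    field_simp
    linarith [hT]
  have hα1 : α < 1 := by
    have : 0 < 1 - α := by rw [hα1']; exact div_pos (mul_pos hc0 hg₁) hT0
    linarith
  refine ⟨α, ⟨le_of_lt hα0, le_of_lt hα1⟩, ?_⟩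
  obtain ⟨Sm, hSm⟩ : ∃ S, (1 - α) • V₁⁻¹ + α • V₂⁻¹ = S := ⟨_, rfl⟩
  rw [hSm]
  have hSposdef : Sm.PosDef := by
    rw [← hSm]
    refine Matrix.PosDef.of_dotProduct_mulVec_pos ?_ ?_
    · show ((1 - α) • V₁⁻¹ + α • V₂⁻¹)ᴴ = _
      rw [Matrix.conjTranspose_add, Matrix.conjTranspose_smul, Matrix.conjTranspose_smul,
        hA₁.1.eq, hA₂.1.eq, star_trivial, star_trivial]
    · intro x hx
      have e : dotProduct (star x) (((1 - α) • V₁⁻¹ + α • V₂⁻¹) *ᵥ x)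
          = (1 - α) * dotProduct (star x) (V₁⁻¹ *ᵥ x) + α * dotProduct (star x) (V₂⁻¹ *ᵥ x) := by
        simp [Matrix.add_mulVec, Matrix.smul_mulVec, dotProduct_add, dotProduct_smul,
          smul_eq_mul]
        ring
      rw [e]
      exact add_pos (mul_pos (by linarith) (hA₁.dotProduct_mulVec_pos hx)) (mul_pos hα0 (hA₂.dotProduct_mulVec_pos hx))
  have key0' : (1 - α) * u₁ 0 + α * u₂ 0 = 0 := by
    rw [hα1', ← hα]
    field_simp
    linear_combination key0
  have key1' : (1 - α) * u₁ 1 + α * u₂ 1 = 0 := by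
    rw [hα1', ← hα]
    field_simp
    linear_combination key1
  have hu₁0 : u₁ 0 = V₁⁻¹ 0 0 * (x₀.1 - μ₁ 0) + V₁⁻¹ 0 1 * (x₀.2 - μ₁ 1) := by
    rw [← hu₁]; simp [mulVec, dotProduct, Fin.sum_univ_two]
  have hu₁1 : u₁ 1 = V₁⁻¹ 1 0 * (x₀.1 - μ₁ 0) + V₁⁻¹ 1 1 * (x₀.2 - μ₁ 1) := by
    rw [← hu₁]; simp [mulVec, dotProduct, Fin.sum_univ_two]
  have hu₂0 : u₂ 0 = V₂⁻¹ 0 0 * (x₀.1 - μ₂ 0) + V₂⁻¹ 0 1 * (x₀.2 - μ₂ 1) := by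
    rw [← hu₂]; simp [mulVec, dotProduct, Fin.sum_univ_two]
  have hu₂1 : u₂ 1 = V₂⁻¹ 1 0 * (x₀.1 - μ₂ 0) + V₂⁻¹ 1 1 * (x₀.2 - μ₂ 1) := by
    rw [← hu₂]; simp [mulVec, dotProduct, Fin.sum_univ_two]
  rw [hu₁0, hu₂0] at key0'
  rw [hu₁1, hu₂1] at key1'
  have hvec : Sm *ᵥ ![x₀.1, x₀.2] = (1 - α) • (V₁⁻¹ *ᵥ μ₁) + α • (V₂⁻¹ *ᵥ μ₂) := by
    rw [← hSm]
    funext i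
    fin_cases i
    · simp only [Fin.zero_eta, Fin.mk_one, mulVec, dotProduct, Fin.sum_univ_two,
        Matrix.cons_val_zero, Matrix.cons_val_one, Matrix.head_cons, Matrix.add_apply,
        Matrix.smul_apply, smul_eq_mul, Pi.add_apply, Pi.smul_apply]
      linear_combination key0'
    · simp only [Fin.zero_eta, Fin.mk_one, mulVec, dotProduct, Fin.sum_univ_two,
        Matrix.cons_val_zero, Matrix.cons_val_one, Matrix.head_cons, Matrix.add_apply,
        Matrix.smul_apply, smul_eq_mul, Pi.add_apply, Pi.smul_apply]
      linear_combination key1'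
  have hdet : IsUnit Sm.det := isUnit_iff_ne_zero.mpr hSposdef.det_pos.ne'
  rw [← hvec, Matrix.mulVec_mulVec, Matrix.nonsing_inv_mul _ hdet, Matrix.one_mulVec]
end

section
/- Let f₁ = φ(·; μ₁, Σ₁) and f₂ = φ(·; μ₂, Σ₂) be bivariate normal densities with μ₁ ≠ μ₂, with Σ₁ and Σ₂ not proportional, and with f₁ and f₂ codirectional. Then for every c ∈ [0, 1], the set of modes (local maximum points) of the mixture density M_c = c f₁ + (1 − c) f₂ has at most 2 elements. -/
open Matrix

open Set Filter Topology Real Polynomial Matrix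


open Set

/-- If a set of reals has no three elements in ascending order, it has at most 2 elements. -/
lemma encard_le_two_of_no_triple {S : Set ℝ}
    (h : ∀ a b c : ℝ, a ∈ S → b ∈ S → c ∈ S → a < b → b < c → False) :
    S.encard ≤ 2 := by
  by_contra hgt
  push_neg at hgt
  have h0 : (0 : ℕ∞) < S.encard := lt_trans (by norm_num) hgt
  obtain ⟨a, ha⟩ := Set.encard_pos.mp h0
  have h1 : (1 : ℕ∞) < (S \ {a}).encard := by
    have := Set.encard_diff_singleton_add_one ha
    rw [← this] at hgt
    rw [show (2:ℕ∞) = 1 + 1 from rfl] at hgt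
    exact lt_of_add_lt_add_right hgt
  obtain ⟨b, hb⟩ := Set.encard_pos.mp (lt_trans (by norm_num) h1)
  have h2 : (0 : ℕ∞) < ((S \ {a}) \ {b}).encard := by
    have := Set.encard_diff_singleton_add_one hb
    rw [← this] at h1
    rw [show (1:ℕ∞) = 0 + 1 from rfl] at h1
    exact lt_of_add_lt_add_right h1
  obtain ⟨d, hd⟩ := Set.encard_pos.mp h2
  have haS : a ∈ S := ha
  have hbS : b ∈ S := hb.1
  have hdS : d ∈ S := hd.1.1
  have hab : a ≠ b := fun e => hb.2 (by simp [e.symm])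
  have hbd : b ≠ d := fun e => hd.2 (by simp [e.symm])
  have had : a ≠ d := fun e => hd.1.2 (by simp [e.symm])
  -- sort a, b, d
  rcases lt_trichotomy a b with h' | h' | h' <;>
  rcases lt_trichotomy b d with h'' | h'' | h'' <;>
  rcases lt_trichotomy a d with h''' | h''' | h''' <;>
    first
      | exact hab h' | exact hbd h'' | exact had h'''
      | exact h a b d haS hbS hdS (by linarith) (by linarith)
      | exact h a d b haS hdS hbS (by linarith) (by linarith)
      | exact h b a d hbS haS hdS (by linarith) (by linarith)
      | exact h b d a hbS hdS haS (by linarith) (by linarith)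
      | exact h d a b hdS haS hbS (by linarith) (by linarith)
      | exact h d b a hdS hbS haS (by linarith) (by linarith)
      | linarith

open Polynomial

/-- A cubic with constant coefficient `-1` has no 4 distinct roots. -/
lemma no_four_roots (a3 a2 a1 : ℝ) {r1 r2 r3 r4 : ℝ}
    (h12 : r1 < r2) (h23 : r2 < r3) (h34 : r3 < r4)
    (e1 : a3*r1^3 + a2*r1^2 + a1*r1 - 1 = 0)
    (e2 : a3*r2^3 + a2*r2^2 + a1*r2 - 1 = 0)
    (e3 : a3*r3^3 + a2*r3^2 + a1*r3 - 1 = 0)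
    (e4 : a3*r4^3 + a2*r4^2 + a1*r4 - 1 = 0) : False := by
  set q : ℝ[X] := C a3 * X^3 + C a2 * X^2 + C a1 * X + C (-1) with hq
  have heval : ∀ x : ℝ, q.eval x = a3*x^3 + a2*x^2 + a1*x - 1 := by
    intro x; simp [hq]; ring
  have hq0 : q ≠ 0 := by
    intro h
    have h0 := heval 0
    rw [h] at h0
    norm_num at h0
  have hdeg : q.natDegree ≤ 3 := by
    rw [hq]; compute_degree
  have hroots : ∀ x : ℝ, a3*x^3 + a2*x^2 + a1*x - 1 = 0 → x ∈ q.roots := by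
    intro x hx
    rw [mem_roots hq0, IsRoot, heval]; exact hx
  have hsub : ({r1, r2, r3, r4} : Finset ℝ) ⊆ q.roots.toFinset := by
    intro x hx
    simp only [Finset.mem_insert, Finset.mem_singleton] at hx
    rw [Multiset.mem_toFinset]
    rcases hx with rfl | rfl | rfl | rfl
    · exact hroots _ e1
    · exact hroots _ e2
    · exact hroots _ e3
    · exact hroots _ e4
  have n12 : r1 ≠ r2 := ne_of_lt h12
  have n13 : r1 ≠ r3 := ne_of_lt (h12.trans h23)
  have n14 : r1 ≠ r4 := ne_of_lt ((h12.trans h23).trans h34)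
  have n23 : r2 ≠ r3 := ne_of_lt h23
  have n24 : r2 ≠ r4 := ne_of_lt (h23.trans h34)
  have n34 : r3 ≠ r4 := ne_of_lt h34
  have hcard : ({r1, r2, r3, r4} : Finset ℝ).card = 4 := by
    rw [Finset.card_insert_of_notMem (by simp [n12, n13, n14]),
        Finset.card_insert_of_notMem (by simp [n23, n24]),
        Finset.card_insert_of_notMem (by simp [n34]), Finset.card_singleton]
  have : 4 ≤ q.roots.toFinset.card := hcard ▸ Finset.card_le_card hsub
  have : 4 ≤ Multiset.card q.roots := le_trans this (Multiset.toFinset_card_le _)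
  have := le_trans this (Polynomial.card_roots' q)
  omega

open Set Filter Topology

lemma exists_deriv_zero_between {g : ℝ → ℝ} (hg : Continuous g)
    {a b : ℝ} (hab : a < b) (ha : IsLocalMax g a) (hb : IsLocalMax g b) :
    ∃ c ∈ Ioo a b, deriv g c = 0 := by
  obtain ⟨c, hcmem, hc⟩ := isCompact_Icc.exists_isMinOn (nonempty_Icc.mpr hab.le)
    (hg.continuousOn (s := Icc a b))
  have key : ∀ d ∈ Ioo a b, IsMinOn g (Icc a b) d → ∃ c ∈ Ioo a b, deriv g c = 0 := by
    intro d hd hmin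
    refine ⟨d, hd, ?_⟩
    exact (hmin.isLocalMin (Icc_mem_nhds hd.1 hd.2)).deriv_eq_zero
  rcases eq_or_lt_of_le hcmem.1 with h1 | h1
  · -- a = c
    have hmaxa : ∀ᶠ x in 𝓝[>] a, g x ≤ g a := ha.filter_mono nhdsWithin_le_nhds
    have hIoo : ∀ᶠ x in 𝓝[>] a, x ∈ Ioo a b :=
      eventually_of_mem (Ioo_mem_nhdsGT_of_mem ⟨le_refl a, hab⟩) (fun x hx => hx)
    obtain ⟨d, hd1, hd2⟩ := (hmaxa.and hIoo).exists
    refine key d hd2 (fun x hx => ?_)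
    calc g d ≤ g a := hd1
    _ = g c := by rw [h1]
    _ ≤ g x := hc hx
  rcases eq_or_lt_of_le hcmem.2 with h2 | h2
  · -- c = b
    have hmaxb : ∀ᶠ x in 𝓝[<] b, g x ≤ g b := hb.filter_mono nhdsWithin_le_nhds
    have hIoo : ∀ᶠ x in 𝓝[<] b, x ∈ Ioo a b :=
      eventually_of_mem (Ioo_mem_nhdsLT_of_mem ⟨hab, le_refl b⟩) (fun x hx => hx)
    obtain ⟨d, hd1, hd2⟩ := (hmaxb.and hIoo).exists
    refine key d hd2 (fun x hx => ?_)
    calc g d ≤ g b := hd1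
    _ = g c := by rw [h2]
    _ ≤ g x := hc hx
  · exact key c ⟨h1, h2⟩ hc

open Set Filter Topology Real

section OneD

variable {k₁ k₂ β₁ β₂ : ℝ}

/-- derivative of the 1D mixture -/
lemma mix1d_hasDeriv (k₁ k₂ β₁ β₂ : ℝ) (t : ℝ) :
    HasDerivAt (fun t => k₁ * Real.exp (-(β₁ * (t-1)^2)) + k₂ * Real.exp (-(β₂ * t^2)))
      (-2*k₁*β₁*(t-1)*Real.exp (-(β₁*(t-1)^2)) - 2*k₂*β₂*t*Real.exp (-(β₂*t^2))) t := by
  have h1 : HasDerivAt (fun t : ℝ => -(β₁ * (t-1)^2)) (-(β₁ * (2*(t-1)))) t := by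
    have := (((hasDerivAt_id t).sub_const 1).pow 2).const_mul β₁
    have := this.neg
    refine this.congr_deriv ?_
    simp only [id_eq]
    push_cast
    ring
  have h2 : HasDerivAt (fun t : ℝ => -(β₂ * t^2)) (-(β₂ * (2*t))) t := by
    have := ((hasDerivAt_id t).pow 2).const_mul β₂
    have := this.neg
    refine this.congr_deriv ?_
    simp only [id_eq]
    push_cast
    ring
  have := ((h1.exp.const_mul k₁).add (h2.exp.const_mul k₂))
  refine this.congr_deriv ?_
  ring

lemma mix1d_crit_mem (hk₁ : 0 ≤ k₁) (hk₂ : 0 ≤ k₂) (hk : 0 < k₁ + k₂)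
    (hβ₁ : 0 < β₁) (hβ₂ : 0 < β₂) {t : ℝ}
    (ht : -2*k₁*β₁*(t-1)*Real.exp (-(β₁*(t-1)^2)) - 2*k₂*β₂*t*Real.exp (-(β₂*t^2)) = 0)
    (hk₁' : 0 < k₁) (hk₂' : 0 < k₂) : 0 < t ∧ t < 1 := by
  have e1 : 0 < Real.exp (-(β₁*(t-1)^2)) := Real.exp_pos _
  have e2 : 0 < Real.exp (-(β₂*t^2)) := Real.exp_pos _
  have hA : 0 < 2*k₁*β₁*Real.exp (-(β₁*(t-1)^2)) := by positivity
  have hB : 0 < 2*k₂*β₂*Real.exp (-(β₂*t^2)) := by positivity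
  constructor
  · by_contra h
    push_neg at h
    nlinarith [mul_pos hA (show (0:ℝ) < 1 - t by linarith),
      mul_nonneg hB.le (show (0:ℝ) ≤ -t by linarith)]
  · by_contra h
    push_neg at h
    nlinarith [mul_nonneg hA.le (show (0:ℝ) ≤ t - 1 by linarith),
      mul_pos hB (show (0:ℝ) < t by linarith)]

end OneD

section OneDH

variable {k₁ k₂ β₁ β₂ : ℝ}

/-- derivative of H on (0,1) -/
lemma H_hasDeriv (β₁ β₂ : ℝ) {t : ℝ} (h0 : 0 < t) (h1 : t < 1) :
    HasDerivAt (fun t => Real.log (1 - t) - Real.log t - β₁*(t-1)^2 + β₂*t^2)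
      (-(1-t)⁻¹ - t⁻¹ - β₁*(2*(t-1)) + β₂*(2*t)) t := by
  have hl1 : HasDerivAt (fun t : ℝ => Real.log (1 - t)) (-(1-t)⁻¹) t := by
    have hd : HasDerivAt (fun t : ℝ => 1 - t) (-1) t := (hasDerivAt_id t).const_sub 1
    have := hd.log (by linarith : 1 - t ≠ 0)
    convert this using 1
    field_simp
  have hl2 : HasDerivAt Real.log t⁻¹ t := Real.hasDerivAt_log (ne_of_gt h0)
  have hq1 : HasDerivAt (fun t : ℝ => β₁*(t-1)^2) (β₁*(2*(t-1))) t := by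
    have := (((hasDerivAt_id t).sub_const 1).pow 2).const_mul β₁
    refine this.congr_deriv ?_
    simp only [id_eq]
    push_cast
    ring
  have hq2 : HasDerivAt (fun t : ℝ => β₂*t^2) (β₂*(2*t)) t := by
    have := ((hasDerivAt_id t).pow 2).const_mul β₂
    refine this.congr_deriv ?_
    simp only [id_eq]
    push_cast
    ring
  exact ((hl1.sub hl2).sub hq1).add hq2

/-- critical points in (0,1) satisfy H = C -/
lemma mix1d_H_eq (hk₁ : 0 < k₁) (hk₂ : 0 < k₂) (hβ₁ : 0 < β₁) (hβ₂ : 0 < β₂)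
    {t : ℝ} (h0 : 0 < t) (h1 : t < 1)
    (ht : -2*k₁*β₁*(t-1)*Real.exp (-(β₁*(t-1)^2)) - 2*k₂*β₂*t*Real.exp (-(β₂*t^2)) = 0) :
    Real.log (1 - t) - Real.log t - β₁*(t-1)^2 + β₂*t^2
      = Real.log (k₂*β₂) - Real.log (k₁*β₁) := by
  have hbal : k₁*β₁*((1-t) * Real.exp (-(β₁*(t-1)^2))) = k₂*β₂*(t * Real.exp (-(β₂*t^2))) := by
    linear_combination (1/2 : ℝ) * ht
  have hlog := congrArg Real.log hbal
  have l1 : Real.log (k₁*β₁*((1-t) * Real.exp (-(β₁*(t-1)^2))))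
      = Real.log (k₁*β₁) + Real.log (1-t) + (-(β₁*(t-1)^2)) := by
    rw [Real.log_mul (by positivity) (ne_of_gt (mul_pos (by linarith) (Real.exp_pos _))),
        Real.log_mul (by linarith) (Real.exp_ne_zero _), Real.log_exp]
    ring
  have l2 : Real.log (k₂*β₂*(t * Real.exp (-(β₂*t^2))))
      = Real.log (k₂*β₂) + Real.log t + (-(β₂*t^2)) := by
    rw [Real.log_mul (by positivity) (ne_of_gt (mul_pos h0 (Real.exp_pos _))),
        Real.log_mul (ne_of_gt h0) (Real.exp_ne_zero _), Real.log_exp]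
    ring
  rw [l1, l2] at hlog
  linarith

/-- zeros of deriv H in (0,1) are roots of the cubic -/
lemma H_deriv_zero_cubic (β₁ β₂ : ℝ) {r : ℝ} (h0 : 0 < r) (h1 : r < 1)
    (hz : deriv (fun t => Real.log (1 - t) - Real.log t - β₁*(t-1)^2 + β₂*t^2) r = 0) :
    (2*β₁-2*β₂)*r^3 + (2*β₂-4*β₁)*r^2 + (2*β₁)*r - 1 = 0 := by
  have hd := (H_hasDeriv β₁ β₂ h0 h1).deriv
  rw [hz] at hd
  have hr0 : r ≠ 0 := ne_of_gt h0
  have hr1 : (1:ℝ) - r ≠ 0 := by linarith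
  field_simp at hd
  linear_combination -hd

end OneDH

/-- Main 1D lemma: a two-component 1D Gaussian mixture (means 1 and 0) has at most 2 modes. -/
lemma mix1d_modes {k₁ k₂ β₁ β₂ : ℝ} (hk₁ : 0 ≤ k₁) (hk₂ : 0 ≤ k₂) (hk : 0 < k₁ + k₂)
    (hβ₁ : 0 < β₁) (hβ₂ : 0 < β₂) :
    {t : ℝ | IsLocalMax (fun t => k₁ * Real.exp (-(β₁ * (t-1)^2)) + k₂ * Real.exp (-(β₂ * t^2))) t}.encard ≤ 2 := by
  set g : ℝ → ℝ := fun t => k₁ * Real.exp (-(β₁ * (t-1)^2)) + k₂ * Real.exp (-(β₂ * t^2)) with hg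
  have hderiv : ∀ t, deriv g t
      = -2*k₁*β₁*(t-1)*Real.exp (-(β₁*(t-1)^2)) - 2*k₂*β₂*t*Real.exp (-(β₂*t^2)) :=
    fun t => (mix1d_hasDeriv k₁ k₂ β₁ β₂ t).deriv
  -- degenerate cases
  rcases eq_or_lt_of_le hk₁ with h1 | h1
  · -- k₁ = 0 : only t = 0 can be a mode
    have : {t : ℝ | IsLocalMax g t} ⊆ {0} := by
      intro t ht
      have h0 := ht.deriv_eq_zero
      rw [hderiv t, ← h1] at h0
      have hk2 : 0 < k₂ := by linarith
      have hpos : 0 < 2*k₂*β₂*Real.exp (-(β₂*t^2)) := by positivity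
      have ht0 : t * (2*k₂*β₂*Real.exp (-(β₂*t^2))) = 0 := by linear_combination -h0
      rcases mul_eq_zero.mp ht0 with h' | h'
      · simp [h']
      · exact absurd h' (ne_of_gt hpos)
    exact le_trans (Set.encard_le_encard this) (by simp)
  rcases eq_or_lt_of_le hk₂ with h2 | h2
  · -- k₂ = 0 : only t = 1
    have : {t : ℝ | IsLocalMax g t} ⊆ {1} := by
      intro t ht
      have h0 := ht.deriv_eq_zero
      rw [hderiv t, ← h2] at h0
      have hpos : 0 < 2*k₁*β₁*Real.exp (-(β₁*(t-1)^2)) := by positivity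
      have ht0 : (t - 1) * (2*k₁*β₁*Real.exp (-(β₁*(t-1)^2))) = 0 := by linear_combination -h0
      rcases mul_eq_zero.mp ht0 with h' | h'
      · have : t = 1 := by linarith
        simp [this]
      · exact absurd h' (ne_of_gt hpos)
    exact le_trans (Set.encard_le_encard this) (by simp)
  -- main case
  set H : ℝ → ℝ := fun t => Real.log (1 - t) - Real.log t - β₁*(t-1)^2 + β₂*t^2 with hH
  have hgcont : Continuous g := by fun_prop
  have hcrit : ∀ t : ℝ, deriv g t = 0 →
      (0 < t ∧ t < 1) ∧ H t = Real.log (k₂*β₂) - Real.log (k₁*β₁) := by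
    intro t ht
    rw [hderiv t] at ht
    have hmem := mix1d_crit_mem hk₁ hk₂ hk hβ₁ hβ₂ ht h1 h2
    exact ⟨hmem, mix1d_H_eq h1 h2 hβ₁ hβ₂ hmem.1 hmem.2 ht⟩
  apply encard_le_two_of_no_triple
  intro a b d ha hb hd hab hbd
  obtain ⟨c₁, hc₁, hdc₁⟩ := exists_deriv_zero_between hgcont hab ha hb
  obtain ⟨c₂, hc₂, hdc₂⟩ := exists_deriv_zero_between hgcont hbd hb hd
  -- five critical points
  have pa := hcrit a ha.deriv_eq_zero
  have pb := hcrit b hb.deriv_eq_zero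
  have pd := hcrit d hd.deriv_eq_zero
  have pc₁ := hcrit c₁ hdc₁
  have pc₂ := hcrit c₂ hdc₂
  -- H is continuous on closed subintervals of (0,1)
  have hHcont : ∀ p q : ℝ, 0 < p → q < 1 → ContinuousOn H (Set.Icc p q) := by
    intro p q hp hq x hx
    exact (H_hasDeriv β₁ β₂ (lt_of_lt_of_le hp hx.1) (lt_of_le_of_lt hx.2 hq)).continuousAt.continuousWithinAt
  -- Rolle between consecutive pairs
  have rolle : ∀ p q : ℝ, 0 < p → q < 1 → p < q → H p = H q →
      ∃ r ∈ Set.Ioo p q, (2*β₁-2*β₂)*r^3 + (2*β₂-4*β₁)*r^2 + (2*β₁)*r - 1 = 0 := by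
    intro p q hp hq hpq hpqH
    obtain ⟨r, hr, hr0⟩ := exists_deriv_eq_zero hpq (hHcont p q hp hq) hpqH
    exact ⟨r, hr, H_deriv_zero_cubic β₁ β₂ (lt_of_lt_of_le hp hr.1.le) (lt_of_le_of_lt hr.2.le hq) hr0⟩
  obtain ⟨r₁, hr₁, e₁⟩ := rolle a c₁ pa.1.1 (lt_trans hc₁.2 pb.1.2) hc₁.1 (by rw [pa.2, pc₁.2])
  obtain ⟨r₂, hr₂, e₂⟩ := rolle c₁ b (lt_trans pa.1.1 hc₁.1) pb.1.2 hc₁.2 (by rw [pc₁.2, pb.2])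
  obtain ⟨r₃, hr₃, e₃⟩ := rolle b c₂ pb.1.1 (lt_trans hc₂.2 pd.1.2) hc₂.1 (by rw [pb.2, pc₂.2])
  obtain ⟨r₄, hr₄, e₄⟩ := rolle c₂ d (lt_trans pb.1.1 hc₂.1) pd.1.2 hc₂.2 (by rw [pc₂.2, pd.2])
  exact no_four_roots (2*β₁-2*β₂) (2*β₂-4*β₁) (2*β₁)
    (lt_trans hr₁.2 hr₂.1) (lt_trans hr₂.2 hr₃.1) (lt_trans hr₃.2 hr₄.1) e₁ e₂ e₃ e₄
lemma gauss_closed_form (μ : Fin 2 → ℝ) (V : Matrix (Fin 2) (Fin 2) ℝ) (hV : V.PosDef)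
    (u0 u1 α : ℝ) (hu : u0^2 + u1^2 ≠ 0)
    (e0 : V 0 0 * u0 + V 0 1 * u1 = α * u0)
    (e1 : V 1 0 * u0 + V 1 1 * u1 = α * u1) :
    0 < α ∧ 0 < V 0 0 + V 1 1 - α ∧ ∃ C : ℝ, 0 < C ∧ ∀ z : ℝ × ℝ,
      gauss μ V z = C * Real.exp (-(((z.1 - μ 0)*u0 + (z.2 - μ 1)*u1)^2 / (2*α*(u0^2+u1^2))
        + ((z.2 - μ 1)*u0 - (z.1 - μ 0)*u1)^2 / (2*(V 0 0 + V 1 1 - α)*(u0^2+u1^2)))) := by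
  have hsym : V 0 1 = V 1 0 := by
    have := congrFun (congrFun hV.1 0) 1
    simpa [Matrix.conjTranspose_apply] using this.symm
  set n : ℝ := u0^2 + u1^2 with hn
  have hnpos : 0 < n := lt_of_le_of_ne (by positivity) (Ne.symm hu)
  have huvec : ![u0, u1] ≠ 0 := by
    intro h
    apply hu
    have h0 := congrFun h 0
    have h1 := congrFun h 1
    simp at h0 h1
    simp [hn, h0, h1]
  have hwvec : ![-u1, u0] ≠ 0 := by
    intro h
    apply hu
    have h0 := congrFun h 0
    have h1 := congrFun h 1
    simp at h0 h1
    simp [hn, h0, h1]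
  -- positivity of α
  have hα : 0 < α := by
    have hq := hV.dotProduct_mulVec_pos huvec
    have : dotProduct (star ![u0, u1]) (V *ᵥ ![u0, u1]) = α * n := by
      simp [Matrix.mulVec, dotProduct, Fin.sum_univ_two]
      linear_combination u0 * e0 + u1 * e1
    rw [this] at hq
    nlinarith [hq, hnpos]
  set α' : ℝ := V 0 0 + V 1 1 - α with hα'def
  -- (−u1, u0) is an eigenvector with eigenvalue α'
  have f0 : V 0 0 * (-u1) + V 0 1 * u0 = α' * (-u1) := by
    rw [hα'def]; linear_combination e1 + u0 * hsym
  have f1 : V 1 0 * (-u1) + V 1 1 * u0 = α' * u0 := by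
    rw [hα'def]; linear_combination -e0 + u1 * hsym
  have hα'pos : 0 < α' := by
    have hq := hV.dotProduct_mulVec_pos hwvec
    have : dotProduct (star ![-u1, u0]) (V *ᵥ ![-u1, u0]) = α' * n := by
      simp [Matrix.mulVec, dotProduct, Fin.sum_univ_two]
      linear_combination (-u1) * f0 + u0 * f1
    rw [this] at hq
    nlinarith [hq, hnpos]
  refine ⟨hα, hα'pos, ?_⟩
  -- inverse action on eigenvectors
  have hdet : IsUnit V.det := isUnit_iff_ne_zero.mpr (ne_of_gt hV.det_pos)
  have hVu : V *ᵥ ![u0, u1] = α • ![u0, u1] := by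
    funext i
    fin_cases i <;> simp [Matrix.mulVec, dotProduct, Fin.sum_univ_two] <;>
      [linear_combination e0; linear_combination e1]
  have hVw : V *ᵥ ![-u1, u0] = α' • ![-u1, u0] := by
    funext i
    fin_cases i <;> simp [Matrix.mulVec, dotProduct, Fin.sum_univ_two] <;>
      [linear_combination f0; linear_combination f1]
  have hinv : ∀ (v : Fin 2 → ℝ) (β : ℝ), 0 < β → V *ᵥ v = β • v → V⁻¹ *ᵥ v = β⁻¹ • v := by
    intro v β hβ hVv
    have h1 : V⁻¹ *ᵥ (V *ᵥ v) = v := by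
      rw [Matrix.mulVec_mulVec, Matrix.nonsing_inv_mul V hdet, Matrix.one_mulVec]
    rw [hVv, Matrix.mulVec_smul] at h1
    have := congrArg (fun w => β⁻¹ • w) h1
    simp only [smul_smul, inv_mul_cancel₀ (ne_of_gt hβ), one_smul] at this
    exact this
  have hinvu := hinv _ _ hα hVu
  have hinvw := hinv _ _ hα'pos hVw
  have hsq : 0 < Real.sqrt V.det := Real.sqrt_pos.mpr hV.det_pos
  refine ⟨(2 * Real.pi * Real.sqrt V.det)⁻¹, by positivity, fun z => ?_⟩
  unfold gauss
  congr 1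
  set x0 : ℝ := z.1 - μ 0 with hx0
  set x1 : ℝ := z.2 - μ 1 with hx1
  set p : ℝ := (x0*u0 + x1*u1)/n with hp
  set q : ℝ := (x1*u0 - x0*u1)/n with hq
  have hdecomp : (![x0, x1] : Fin 2 → ℝ) = p • ![u0, u1] + q • ![-u1, u0] := by
    funext i
    fin_cases i <;>
      simp only [Fin.isValue, Matrix.cons_val_zero, Matrix.cons_val_one, Matrix.head_cons,
        Pi.add_apply, Pi.smul_apply, smul_eq_mul, hp, hq, Fin.zero_eta, Fin.mk_one] <;>
      · field_simp
        rw [hn]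
        ring
  have hvx : V⁻¹ *ᵥ ![x0, x1] = (p*α⁻¹) • ![u0, u1] + (q*α'⁻¹) • ![-u1, u0] := by
    rw [hdecomp, Matrix.mulVec_add, Matrix.mulVec_smul, Matrix.mulVec_smul, hinvu, hinvw,
      smul_smul, smul_smul]
  rw [hvx]
  simp only [dotProduct, Fin.sum_univ_two, Pi.add_apply, Pi.smul_apply, smul_eq_mul,
    Matrix.cons_val_zero, Matrix.cons_val_one, Matrix.head_cons]
  rw [hp, hq]
  field_simp
  ring

lemma qderiv (K β Qv n : ℝ) :
    HasDerivAt (fun t : ℝ => K * Real.exp (-((Qv + t*n)^2/β)))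
      (K * Real.exp (-(Qv^2/β)) * (-(2*Qv*n/β))) 0 := by
  have h0 : HasDerivAt (fun t : ℝ => Qv + t*n) n 0 := by
    simpa using ((hasDerivAt_id 0).mul_const n).const_add Qv
  have h2 := ((((h0.pow 2).div_const β).neg).exp).const_mul K
  refine h2.congr_deriv ?_
  norm_num
  ring
set_option maxHeartbeats 2000000 in
set_option maxRecDepth 8000 in
theorem stmt_19 (μ₁ μ₂ : Fin 2 → ℝ) (V₁ V₂ : Matrix (Fin 2) (Fin 2) ℝ)
    (h₁ : V₁.PosDef) (h₂ : V₂.PosDef) (hμ : μ₁ ≠ μ₂)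
    (hprop : ¬ Proportional V₁ V₂) (hcod : Codirectional μ₁ μ₂ V₁ V₂)
    (c : ℝ) (hc : c ∈ Set.Icc (0 : ℝ) 1) :
    {z : ℝ × ℝ | IsLocalMax (mix (gauss μ₁ V₁) (gauss μ₂ V₂) c) z}.encard ≤ 2 := by
  obtain ⟨hc0, hc1⟩ := hc
  set u0 : ℝ := μ₁ 0 - μ₂ 0 with hu0
  set u1 : ℝ := μ₁ 1 - μ₂ 1 with hu1
  set n : ℝ := u0^2 + u1^2 with hndef
  have hu : n ≠ 0 := by
    intro h
    apply hμ
    have h0 : u0 = 0 := by nlinarith [sq_nonneg u0, sq_nonneg u1]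
    have h1 : u1 = 0 := by nlinarith [sq_nonneg u0, sq_nonneg u1]
    funext i
    fin_cases i
    · show μ₁ 0 = μ₂ 0
      have := hu0 ▸ h0
      linarith
    · show μ₁ 1 = μ₂ 1
      have := hu1 ▸ h1
      linarith
  have hnpos : 0 < n := lt_of_le_of_ne (by positivity) (Ne.symm hu)
  obtain ⟨a, b, heig1, heig2⟩ := hcod
  have e10 : V₁ 0 0 * u0 + V₁ 0 1 * u1 = a * u0 := by
    have := congrFun heig1 0
    simpa [Matrix.mulVec, dotProduct, Fin.sum_univ_two] using this
  have e11 : V₁ 1 0 * u0 + V₁ 1 1 * u1 = a * u1 := by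
    have := congrFun heig1 1
    simpa [Matrix.mulVec, dotProduct, Fin.sum_univ_two] using this
  have e20 : V₂ 0 0 * u0 + V₂ 0 1 * u1 = b * u0 := by
    have := congrFun heig2 0
    simpa [Matrix.mulVec, dotProduct, Fin.sum_univ_two] using this
  have e21 : V₂ 1 0 * u0 + V₂ 1 1 * u1 = b * u1 := by
    have := congrFun heig2 1
    simpa [Matrix.mulVec, dotProduct, Fin.sum_univ_two] using this
  obtain ⟨hapos, ha'pos, C₁, hC₁, hg1⟩ := gauss_closed_form μ₁ V₁ h₁ u0 u1 a hu e10 e11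
  obtain ⟨hbpos, hb'pos, C₂, hC₂, hg2⟩ := gauss_closed_form μ₂ V₂ h₂ u0 u1 b hu e20 e21
  set a' : ℝ := V₁ 0 0 + V₁ 1 1 - a with ha'def
  set b' : ℝ := V₂ 0 0 + V₂ 1 1 - b with hb'def
  set M : ℝ × ℝ → ℝ := mix (gauss μ₁ V₁) (gauss μ₂ V₂) c with hM
  -- step 1: all local maxima lie on the line through μ₁ and μ₂
  have step1 : ∀ z : ℝ × ℝ, IsLocalMax M z → (z.2 - μ₂ 1)*u0 - (z.1 - μ₂ 0)*u1 = 0 := by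
    intro z hz
    set Qv : ℝ := (z.2 - μ₂ 1)*u0 - (z.1 - μ₂ 0)*u1 with hQv
    set P1 : ℝ := (z.1 - μ₁ 0)*u0 + (z.2 - μ₁ 1)*u1 with hP1
    set P2 : ℝ := (z.1 - μ₂ 0)*u0 + (z.2 - μ₂ 1)*u1 with hP2
    set K₁ : ℝ := c*C₁*Real.exp (-(P1^2/(2*a*n))) with hK₁
    set K₂ : ℝ := (1-c)*C₂*Real.exp (-(P2^2/(2*b*n))) with hK₂
    set ψ : ℝ → ℝ × ℝ := fun t => (z.1 - t*u1, z.2 + t*u0) with hψ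
    have hψ0 : ψ 0 = z := by
      simp only [hψ]
      exact Prod.ext (by ring) (by ring)
    have hψc : ContinuousAt ψ 0 := by fun_prop
    have hloc : IsLocalMax (fun t => M (ψ t)) 0 := by
      have hz' : IsLocalMax M (ψ 0) := hψ0 ▸ hz
      exact hψc.tendsto.eventually hz'
    have hMψ : (fun t => M (ψ t)) = fun t => K₁ * Real.exp (-((Qv + t*n)^2/(2*a'*n)))
        + K₂ * Real.exp (-((Qv + t*n)^2/(2*b'*n))) := by
      funext t
      show c * gauss μ₁ V₁ (ψ t) + (1-c) * gauss μ₂ V₂ (ψ t) = _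
      rw [hg1, hg2]
      have q1 : (((ψ t).1 - μ₁ 0)*u0 + ((ψ t).2 - μ₁ 1)*u1)^2 / (2*a*(u0^2+u1^2))
          + (((ψ t).2 - μ₁ 1)*u0 - ((ψ t).1 - μ₁ 0)*u1)^2 / (2*a'*(u0^2+u1^2))
          = P1^2/(2*a*n) + (Qv + t*n)^2/(2*a'*n) := by
        have l1 : ((ψ t).1 - μ₁ 0)*u0 + ((ψ t).2 - μ₁ 1)*u1 = P1 := by
          simp only [hψ, hP1]
          ring
        have l2 : ((ψ t).2 - μ₁ 1)*u0 - ((ψ t).1 - μ₁ 0)*u1 = Qv + t*n := by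
          simp only [hψ, hQv]
          rw [hndef, hu0, hu1]
          ring
        rw [l1, l2, hndef]
      have q2 : (((ψ t).1 - μ₂ 0)*u0 + ((ψ t).2 - μ₂ 1)*u1)^2 / (2*b*(u0^2+u1^2))
          + (((ψ t).2 - μ₂ 1)*u0 - ((ψ t).1 - μ₂ 0)*u1)^2 / (2*b'*(u0^2+u1^2))
          = P2^2/(2*b*n) + (Qv + t*n)^2/(2*b'*n) := by
        have l1 : ((ψ t).1 - μ₂ 0)*u0 + ((ψ t).2 - μ₂ 1)*u1 = P2 := by
          simp only [hψ, hP2]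
          ring
        have l2 : ((ψ t).2 - μ₂ 1)*u0 - ((ψ t).1 - μ₂ 0)*u1 = Qv + t*n := by
          simp only [hψ, hQv]
          rw [hndef]
          ring
        rw [l1, l2, hndef]
      rw [q1, q2,
        show -(P1^2/(2*a*n) + (Qv + t*n)^2/(2*a'*n))
          = -(P1^2/(2*a*n)) + -((Qv + t*n)^2/(2*a'*n)) from by ring,
        show -(P2^2/(2*b*n) + (Qv + t*n)^2/(2*b'*n))
          = -(P2^2/(2*b*n)) + -((Qv + t*n)^2/(2*b'*n)) from by ring,
        Real.exp_add, Real.exp_add, hK₁, hK₂]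
      ring
    rw [hMψ] at hloc
    have hD := (qderiv K₁ (2*a'*n) Qv n).add (qderiv K₂ (2*b'*n) Qv n)
    have hval := hloc.deriv_eq_zero
    rw [(show HasDerivAt (fun t : ℝ => K₁ * Real.exp (-((Qv + t*n)^2/(2*a'*n)))
        + K₂ * Real.exp (-((Qv + t*n)^2/(2*b'*n)))) _ 0 from hD).deriv] at hval
    have hK₁0 : 0 ≤ K₁ := by
      rw [hK₁]
      have := Real.exp_pos (-(P1^2/(2*a*n)))
      nlinarith [mul_nonneg hc0 hC₁.le]
    have hK₂0 : 0 ≤ K₂ := by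
      rw [hK₂]
      have := Real.exp_pos (-(P2^2/(2*b*n)))
      nlinarith [mul_nonneg (show (0:ℝ) ≤ 1 - c by linarith) hC₂.le]
    have hKsum : 0 < K₁*Real.exp (-(Qv^2/(2*a'*n)))*b' + K₂*Real.exp (-(Qv^2/(2*b'*n)))*a' := by
      have hE1 := Real.exp_pos (-(Qv^2/(2*a'*n)))
      have hE2 := Real.exp_pos (-(Qv^2/(2*b'*n)))
      rcases lt_or_eq_of_le hc1 with h | h
      · have hK₂p : 0 < K₂ := by
          rw [hK₂]
          have h2c : 0 < 1 - c := by linarith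
          positivity
        nlinarith [mul_nonneg (mul_nonneg hK₁0 hE1.le) ha'pos.le,
          mul_pos (mul_pos hK₂p hE2) ha'pos, mul_nonneg (mul_nonneg hK₁0 hE1.le) hb'pos.le]
      · have hK₁p : 0 < K₁ := by
          rw [hK₁, h]
          norm_num
          positivity
        nlinarith [mul_pos (mul_pos hK₁p hE1) hb'pos,
          mul_nonneg (mul_nonneg hK₂0 hE2.le) ha'pos.le]
    have hfac : Qv * (K₁*Real.exp (-(Qv^2/(2*a'*n)))*b' + K₂*Real.exp (-(Qv^2/(2*b'*n)))*a') = 0 := by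
      have h1' : a' ≠ 0 := ha'pos.ne'
      have h2' : b' ≠ 0 := hb'pos.ne'
      have hred : ∀ β : ℝ, β ≠ 0 → -(2*Qv*n/(2*β*n)) = -(Qv/β) := by
        intro β hβ
        field_simp
      rw [hred a' h1', hred b' h2'] at hval
      clear_value K₁ K₂ Qv P1 P2 n a' b'
      field_simp at hval
      rw [show (2*n*b') = 2*b'*n by ring] at hval
      first
        | linear_combination hval
        | linear_combination -hval
        | linear_combination Qv * hval
        | linarith [hval]
    rcases mul_eq_zero.mp hfac with h | h
    · exact h
    · exact absurd h (ne_of_gt hKsum)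
  -- the 1D restriction
  set T : ℝ → ℝ × ℝ := fun t => (μ₂ 0 + t*u0, μ₂ 1 + t*u1) with hT
  set τ : ℝ × ℝ → ℝ := fun z => ((z.1 - μ₂ 0)*u0 + (z.2 - μ₂ 1)*u1)/n with hτ
  -- step 2: points on the line are recovered from their parameter
  have step2 : ∀ z : ℝ × ℝ, (z.2 - μ₂ 1)*u0 - (z.1 - μ₂ 0)*u1 = 0 → z = T (τ z) := by
    intro z hQ
    have : τ z * u0 = z.1 - μ₂ 0 := by
      rw [hτ]
      field_simp
      linear_combination u1 * hQ
    have h2 : τ z * u1 = z.2 - μ₂ 1 := by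
      rw [hτ]
      field_simp
      linear_combination (-u0) * hQ
    rw [hT]
    exact Prod.ext (by dsimp only; linarith) (by dsimp only; linarith)
  -- step 3: closed form of the 1D restriction
  set g₀ : ℝ → ℝ := fun t => M (T t) with hg₀
  have step3 : g₀ = fun t => (c*C₁) * Real.exp (-((n/(2*a)) * (t-1)^2))
      + ((1-c)*C₂) * Real.exp (-((n/(2*b)) * t^2)) := by
    funext t
    show c * gauss μ₁ V₁ (T t) + (1-c) * gauss μ₂ V₂ (T t) = _
    rw [hg1, hg2]
    have q1 : (((T t).1 - μ₁ 0)*u0 + ((T t).2 - μ₁ 1)*u1)^2 / (2*a*(u0^2+u1^2))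
        + (((T t).2 - μ₁ 1)*u0 - ((T t).1 - μ₁ 0)*u1)^2 / (2*a'*(u0^2+u1^2))
        = (n/(2*a))*(t-1)^2 := by
      have l1 : ((T t).1 - μ₁ 0)*u0 + ((T t).2 - μ₁ 1)*u1 = (t-1)*n := by
        simp only [hT]
        rw [hndef, hu0, hu1]
        ring
      have l2 : ((T t).2 - μ₁ 1)*u0 - ((T t).1 - μ₁ 0)*u1 = 0 := by
        simp only [hT]
        rw [hu0, hu1]
        ring
      rw [l1, l2, hndef]
      have h1' : a ≠ 0 := hapos.ne'
      have h2' : a' ≠ 0 := ha'pos.ne'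
      have h3' : u0^2 + u1^2 ≠ 0 := hndef ▸ hu
      field_simp
      ring
    have q2 : (((T t).1 - μ₂ 0)*u0 + ((T t).2 - μ₂ 1)*u1)^2 / (2*b*(u0^2+u1^2))
        + (((T t).2 - μ₂ 1)*u0 - ((T t).1 - μ₂ 0)*u1)^2 / (2*b'*(u0^2+u1^2))
        = (n/(2*b))*t^2 := by
      have l1 : ((T t).1 - μ₂ 0)*u0 + ((T t).2 - μ₂ 1)*u1 = t*n := by
        simp only [hT]
        rw [hndef]
        ring
      have l2 : ((T t).2 - μ₂ 1)*u0 - ((T t).1 - μ₂ 0)*u1 = 0 := by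
        simp only [hT]
        ring
      rw [l1, l2, hndef]
      have h1' : b ≠ 0 := hbpos.ne'
      have h2' : b' ≠ 0 := hb'pos.ne'
      have h3' : u0^2 + u1^2 ≠ 0 := hndef ▸ hu
      field_simp
      ring
    rw [q1, q2]
    ring
  -- step 4: local maxima of M give local maxima of g₀
  have step4 : ∀ z : ℝ × ℝ, IsLocalMax M z → IsLocalMax g₀ (τ z) := by
    intro z hz
    have hzT : z = T (τ z) := step2 z (step1 z hz)
    have hTc : ContinuousAt T (τ z) := by fun_prop
    have hz' : IsLocalMax M (T (τ z)) := hzT ▸ hz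
    exact hTc.tendsto.eventually hz'
  -- conclude
  have hinj : Set.InjOn τ {z | IsLocalMax M z} := by
    intro z hz z' hz' he
    rw [step2 z (step1 z hz), step2 z' (step1 z' hz'), he]
  have himg : τ '' {z | IsLocalMax M z} ⊆ {t | IsLocalMax g₀ t} := by
    rintro t ⟨z, hz, rfl⟩
    exact step4 z hz
  rw [← hinj.encard_image]
  refine le_trans (Set.encard_le_encard himg) ?_
  have h2d : {t | IsLocalMax g₀ t} = {t | IsLocalMax (fun t => (c*C₁) * Real.exp (-((n/(2*a)) * (t-1)^2))
      + ((1-c)*C₂) * Real.exp (-((n/(2*b)) * t^2))) t} := by rw [step3]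
  rw [h2d]
  apply mix1d_modes
  · positivity
  · have : (0:ℝ) ≤ 1 - c := by linarith
    positivity
  · rcases lt_or_eq_of_le hc1 with h | h
    · have : 0 < (1-c)*C₂ := by
        apply mul_pos (by linarith) hC₂
      nlinarith [mul_nonneg hc0 hC₁.le]
    · have : 0 < c*C₁ := by rw [h]; simpa using hC₁
      nlinarith [mul_nonneg (by linarith : (0:ℝ) ≤ 1 - c) hC₂.le]
  · positivity
  · positivity
end
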